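/- Let θ ≥ 3 be an integer. For t ∈ (1/θ, 1) define R_1(t) = 2θ(θ−1) · ( t·log t + (1−t)·log((1−t)/(θ−1)) + log θ ) / (θt − 1)². Then R_1(t) ≥ 2((θ−1)/(θ−2))·log(θ−1) for every t ∈ (1/θ, 1), with equality if and only if t = (θ−1)/θ. In particular inf_{t ∈ (1/θ,1)} R_1(t) = 2((θ−1)/(θ−2))·log(θ−1). -/

import Mathlib

/-!
Write `R_1(t) - β_c = 2(θ-1) g(t) / (θt-1)²` with `g(t) = θ D(t) - c (θt-1)²`, where
`c = log(θ-1)/(θ-2)` and `D(t) = t log t + (1-t) log((1-t)/(θ-1)) + log θ`. Then `g' = θ h`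
with `h(t) = log t - log(1-t) + log(θ-1) - 2c(θt-1)`, which is odd about `1/2` and strictly
concave on `(0, 1/2]`, since `h' = 1/(t(1-t)) - 2cθ` decreases there. As `h` vanishes at `1/θ`
and at `1/2`, concavity and oddness give its sign: positive on `(1/θ, 1/2)` and on
`((θ-1)/θ, 1)`, negative on `(1/2, (θ-1)/θ)`. So `g` increases from `g(1/θ) = 0`, decreases to
`g((θ-1)/θ) = 0` and increases again: it is positive on `(1/θ, 1)` except at `(θ-1)/θ`.
-/

/-- `R_1(t) = 2θ(θ−1)·(t·log t + (1−t)·log((1−t)/(θ−1)) + log θ)/(θt − 1)²`. -/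
noncomputable def Rone (θ : ℕ) (t : ℝ) : ℝ :=
  2 * (θ : ℝ) * ((θ : ℝ) - 1) *
    (t * Real.log t + (1 - t) * Real.log ((1 - t) / ((θ : ℝ) - 1)) + Real.log (θ : ℝ)) /
    ((θ : ℝ) * t - 1) ^ 2

open Real Set

noncomputable def critCoeff (T : ℝ) : ℝ := log (T - 1) / (T - 2)

/-- Relative entropy, with respect to the uniform distribution on `T` points, of the
distribution giving mass `t` to one point and `(1 - t) / (T - 1)` to each of the others. -/
noncomputable def klUniform (T t : ℝ) : ℝ :=
  t * log t + (1 - t) * log ((1 - t) / (T - 1)) + log T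

noncomputable def excess (T t : ℝ) : ℝ := T * klUniform T t - critCoeff T * (T * t - 1) ^ 2

noncomputable def excessSlope (T t : ℝ) : ℝ :=
  log t - log (1 - t) + log (T - 1) - 2 * critCoeff T * (T * t - 1)

lemma Rone_sub_eq (θ : ℕ) {t : ℝ} (ht : (θ : ℝ) * t - 1 ≠ 0) :
    Rone θ t - 2 * (((θ : ℝ) - 1) / ((θ : ℝ) - 2)) * log ((θ : ℝ) - 1)
      = 2 * ((θ : ℝ) - 1) * excess θ t / ((θ : ℝ) * t - 1) ^ 2 := by
  unfold Rone excess klUniform critCoeff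
  field_simp

section

variable {T t : ℝ}

lemma hasDerivAt_excessSlope (h0 : 0 < t) (h1 : t < 1) :
    HasDerivAt (excessSlope T) (t⁻¹ + (1 - t)⁻¹ - 2 * critCoeff T * T) t := by
  have hlog : HasDerivAt (fun t => log (1 - t)) (-(1 - t)⁻¹) t :=
    (((hasDerivAt_id' t).const_sub 1).log (by linarith)).congr_deriv (by rw [neg_div, one_div])
  have hlin : HasDerivAt (fun t => T * t - 1) T t := by
    simpa using ((hasDerivAt_id' t).const_mul T).sub_const 1
  refine ((((hasDerivAt_log h0.ne').sub hlog).add_const (log (T - 1))).sub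
    (hlin.const_mul (2 * critCoeff T))).congr_deriv ?_
  ring

lemma hasDerivAt_excess (hT : T ≠ 1) (h0 : 0 < t) (h1 : t < 1) :
    HasDerivAt (excess T) (T * excessSlope T t) t := by
  have hT1 : T - 1 ≠ 0 := sub_ne_zero.mpr hT
  have h1t : 1 - t ≠ 0 := by linarith
  have hent : HasDerivAt (fun t => t * log t) (log t + 1) t :=
    ((hasDerivAt_id' t).mul (hasDerivAt_log h0.ne')).congr_deriv (by field_simp)
  have hent' : HasDerivAt (fun t => (1 - t) * log ((1 - t) / (T - 1)))
      (-(log (1 - t) - log (T - 1)) - 1) t := by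
    have hu : HasDerivAt (fun t => log ((1 - t) / (T - 1))) (-(1 - t)⁻¹) t :=
      ((((hasDerivAt_id' t).const_sub 1).div_const (T - 1)).log (div_ne_zero h1t hT1)).congr_deriv
        (by field_simp)
    refine (((hasDerivAt_id' t).const_sub 1).mul hu).congr_deriv ?_
    rw [log_div h1t hT1]
    field_simp
    ring
  have hsq : HasDerivAt (fun t => (T * t - 1) ^ 2) (2 * (T * t - 1) * T) t := by
    simpa [mul_comm] using (((hasDerivAt_id' t).const_mul T).sub_const 1).fun_pow 2
  refine ((((hent.add hent').add_const (log T)).const_mul T).sub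
    (hsq.const_mul (critCoeff T))).congr_deriv ?_
  unfold excessSlope
  ring

lemma excessSlope_one_sub (hT : T ≠ 2) (t : ℝ) : excessSlope T (1 - t) = -excessSlope T t := by
  have hT2 : T - 2 ≠ 0 := sub_ne_zero.mpr hT
  unfold excessSlope critCoeff
  rw [sub_sub_cancel]
  field_simp
  ring

lemma excessSlope_half (hT : T ≠ 2) : excessSlope T (1 / 2) = 0 := by
  have := excessSlope_one_sub hT (1 / 2)
  norm_num at this ⊢
  linarith

lemma excessSlope_one_div (hT0 : T ≠ 0) (hT1 : T ≠ 1) : excessSlope T (1 / T) = 0 := by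
  have h : 1 - 1 / T = (T - 1) / T := by field_simp
  unfold excessSlope
  rw [h, log_div (sub_ne_zero.mpr hT1) hT0, one_div, log_inv, mul_inv_cancel₀ hT0]
  ring

lemma excess_one_div (hT0 : T ≠ 0) (hT1 : T ≠ 1) : excess T (1 / T) = 0 := by
  have h : (1 - 1 / T) / (T - 1) = 1 / T := by field_simp [sub_ne_zero.mpr hT1]
  unfold excess klUniform
  rw [h, one_div, log_inv]
  field_simp
  ring

lemma excess_sub_one_div (hT0 : T ≠ 0) (hT1 : T ≠ 1) :
    excess T ((T - 1) / T) = 0 := by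
  have hT1' : T - 1 ≠ 0 := sub_ne_zero.mpr hT1
  have h1 : 1 - (T - 1) / T = 1 / T := by field_simp; ring
  have h2 : 1 / T / (T - 1) = (T * (T - 1))⁻¹ := by field_simp
  have h3 : T * ((T - 1) / T) - 1 = T - 2 := by field_simp; ring
  unfold excess klUniform critCoeff
  rw [h1, h2, h3, log_div hT1' hT0, log_inv, log_mul hT0 hT1']
  field_simp
  ring

lemma strictAntiOn_inv_add_inv_one_sub :
    StrictAntiOn (fun t : ℝ => t⁻¹ + (1 - t)⁻¹) (Ioc 0 (1 / 2)) := by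
  intro x ⟨hx0, hx⟩ y ⟨hy0, hy⟩ hxy
  have hsplit : ∀ t : ℝ, 0 < t → t < 1 → t⁻¹ + (1 - t)⁻¹ = (t * (1 - t))⁻¹ := by
    intro t h0 h1
    field_simp [show 1 - t ≠ 0 by linarith]
    ring
  simp only
  rw [hsplit x hx0 (by linarith), hsplit y hy0 (by linarith)]
  exact inv_strictAnti₀ (by nlinarith) (by nlinarith)

lemma strictConcaveOn_excessSlope : StrictConcaveOn ℝ (Ioc 0 (1 / 2)) (excessSlope T) := by
  have hderiv : ∀ t ∈ Ioc (0 : ℝ) (1 / 2), HasDerivAt (excessSlope T)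
      (t⁻¹ + (1 - t)⁻¹ - 2 * critCoeff T * T) t :=
    fun t ht => hasDerivAt_excessSlope ht.1 (by linarith [ht.2])
  refine StrictAntiOn.strictConcaveOn_of_deriv (convex_Ioc 0 _)
    (HasDerivAt.continuousOn hderiv) ?_
  rw [interior_Ioc]
  refine ((strictAntiOn_inv_add_inv_one_sub.mono Ioo_subset_Ioc_self).add_const
    (-(2 * critCoeff T * T))).congr (f₂ := deriv (excessSlope T)) ?_
  intro t ht
  exact (hderiv t (Ioo_subset_Ioc_self ht)).deriv.symm

lemma excess_strictMonoOn (hT0 : 0 < T) (hT1 : T ≠ 1) {D : Set ℝ} (hD : Convex ℝ D)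
    (hD01 : D ⊆ Ioo 0 1) (hpos : ∀ t ∈ interior D, 0 < excessSlope T t) :
    StrictMonoOn (excess T) D := by
  have hderiv t (ht : t ∈ D) := hasDerivAt_excess hT1 (hD01 ht).1 (hD01 ht).2
  refine strictMonoOn_of_deriv_pos hD (HasDerivAt.continuousOn hderiv) fun t ht => ?_
  rw [(hderiv t (interior_subset ht)).deriv]
  exact mul_pos hT0 (hpos t ht)

lemma excess_strictAntiOn (hT0 : 0 < T) (hT1 : T ≠ 1) {D : Set ℝ} (hD : Convex ℝ D)
    (hD01 : D ⊆ Ioo 0 1) (hneg : ∀ t ∈ interior D, excessSlope T t < 0) :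
    StrictAntiOn (excess T) D := by
  have hderiv t (ht : t ∈ D) := hasDerivAt_excess hT1 (hD01 ht).1 (hD01 ht).2
  refine strictAntiOn_of_deriv_neg hD (HasDerivAt.continuousOn hderiv) fun t ht => ?_
  rw [(hderiv t (interior_subset ht)).deriv]
  exact mul_neg_of_pos_of_neg hT0 (hneg t ht)

variable (hT : 2 < T)
include hT

lemma one_div_lt_half : 1 / T < 1 / 2 := one_div_lt_one_div_of_lt two_pos hT

lemma half_lt_sub_one_div : 1 / 2 < (T - 1) / T := by
  rw [div_lt_div_iff₀ two_pos (by linarith)]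
  linarith

lemma excessSlope_pos_of_one_div_lt (h1 : 1 / T < t) (h2 : t < 1 / 2) : 0 < excessSlope T t := by
  have hslope := (strictConcaveOn_excessSlope (T := T)).slope_anti_adjacent
    ⟨by positivity, (one_div_lt_half hT).le⟩ (right_mem_Ioc.mpr one_half_pos) h1 h2
  rw [excessSlope_half (by linarith), excessSlope_one_div (by linarith) (by linarith)] at hslope
  by_contra! hneg
  have : 0 ≤ (0 - excessSlope T t) / (1 / 2 - t) := div_nonneg (by linarith) (by linarith)
  have : (excessSlope T t - 0) / (t - 1 / T) ≤ 0 :=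
    div_nonpos_of_nonpos_of_nonneg (by linarith) (by linarith)
  linarith

lemma excessSlope_neg_of_lt_one_div (h0 : 0 < t) (h1 : t < 1 / T) : excessSlope T t < 0 := by
  have hslope := (strictConcaveOn_excessSlope (T := T)).slope_anti_adjacent
    ⟨h0, by linarith [one_div_lt_half hT]⟩ (right_mem_Ioc.mpr one_half_pos) h1
    (one_div_lt_half hT)
  rw [excessSlope_half (by linarith), excessSlope_one_div (by linarith) (by linarith),
    sub_self, zero_div, lt_div_iff₀ (by linarith)] at hslope
  linarith

lemma excessSlope_neg_of_half_lt (h1 : 1 / 2 < t) (h2 : t < (T - 1) / T) :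
    excessSlope T t < 0 := by
  have h : 1 - (T - 1) / T = 1 / T := by field_simp; ring
  have := excessSlope_pos_of_one_div_lt hT (t := 1 - t) (by linarith) (by linarith)
  rw [excessSlope_one_sub (by linarith)] at this
  linarith

lemma excessSlope_pos_of_sub_one_div_lt (h1 : (T - 1) / T < t) (h2 : t < 1) :
    0 < excessSlope T t := by
  have h : 1 - (T - 1) / T = 1 / T := by field_simp; ring
  have := excessSlope_neg_of_lt_one_div hT (t := 1 - t) (by linarith) (by linarith)
  rw [excessSlope_one_sub (by linarith)] at this
  linarith

lemma excess_pos (ht : t ∈ Ioo (1 / T) 1) (hne : t ≠ (T - 1) / T) : 0 < excess T t := by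
  have hT0 : 0 < T := by linarith
  have hT1 : T ≠ 1 := by linarith
  have ha := one_div_lt_half hT
  have hb := half_lt_sub_one_div hT
  have hb1 : (T - 1) / T < 1 := by rw [div_lt_one hT0]; linarith
  have ha0 : 0 < 1 / T := by positivity
  obtain ⟨h1, h2⟩ := ht
  rcases le_or_gt t (1 / 2) with h | h
  · have hmono := excess_strictMonoOn hT0 hT1 (convex_Icc (1 / T) (1 / 2))
      (fun u hu => ⟨by linarith [hu.1], by linarith [hu.2]⟩)
      (fun u hu => by
        rw [interior_Icc] at hu
        exact excessSlope_pos_of_one_div_lt hT hu.1 hu.2)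
    have := hmono (left_mem_Icc.mpr ha.le) ⟨h1.le, h⟩ h1
    rwa [excess_one_div hT0.ne' hT1] at this
  rcases lt_or_gt_of_ne hne with h' | h'
  · have hanti := excess_strictAntiOn hT0 hT1 (convex_Icc (1 / 2) ((T - 1) / T))
      (fun u hu => ⟨by linarith [hu.1], by linarith [hu.2]⟩)
      (fun u hu => by
        rw [interior_Icc] at hu
        exact excessSlope_neg_of_half_lt hT hu.1 hu.2)
    have := hanti ⟨h.le, h'.le⟩ (right_mem_Icc.mpr hb.le) h'
    rwa [excess_sub_one_div hT0.ne' hT1] at this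
  · have hmono := excess_strictMonoOn hT0 hT1 (convex_Ico ((T - 1) / T) 1)
      (fun u hu => ⟨by linarith [hu.1], hu.2⟩)
      (fun u hu => by
        rw [interior_Ico] at hu
        exact excessSlope_pos_of_sub_one_div_lt hT hu.1 hu.2)
    have := hmono (left_mem_Ico.mpr hb1) ⟨h'.le, h2⟩ h'
    rwa [excess_sub_one_div hT0.ne' hT1] at this

end

lemma le_Rone_and_eq_iff {θ : ℕ} (hθ : (2 : ℝ) < θ) {t : ℝ}
    (ht : t ∈ Ioo (1 / (θ : ℝ)) 1) :
    2 * (((θ : ℝ) - 1) / ((θ : ℝ) - 2)) * log ((θ : ℝ) - 1) ≤ Rone θ t ∧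
      (Rone θ t = 2 * (((θ : ℝ) - 1) / ((θ : ℝ) - 2)) * log ((θ : ℝ) - 1) ↔
        t = ((θ : ℝ) - 1) / (θ : ℝ)) := by
  have hpos : 0 < (θ : ℝ) * t - 1 := by
    have := (div_lt_iff₀ (by linarith : (0 : ℝ) < θ)).mp ht.1
    linarith
  rw [← sub_nonneg, ← sub_eq_zero (a := Rone θ t), Rone_sub_eq θ hpos.ne']
  rcases eq_or_ne t (((θ : ℝ) - 1) / θ) with rfl | hne
  · simp [excess_sub_one_div (T := θ) (by linarith) (by linarith)]
  · have hquot : 0 < 2 * ((θ : ℝ) - 1) * excess θ t / ((θ : ℝ) * t - 1) ^ 2 :=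
      div_pos (mul_pos (by linarith) (excess_pos hθ ht hne)) (by positivity)
    exact ⟨hquot.le, iff_of_false hquot.ne' hne⟩

theorem stmt18 (θ : ℕ) (hθ : 3 ≤ θ) :
    (∀ t ∈ Set.Ioo (1 / (θ : ℝ)) 1,
      2 * (((θ : ℝ) - 1) / ((θ : ℝ) - 2)) * Real.log ((θ : ℝ) - 1) ≤ Rone θ t ∧
      (Rone θ t = 2 * (((θ : ℝ) - 1) / ((θ : ℝ) - 2)) * Real.log ((θ : ℝ) - 1) ↔
        t = ((θ : ℝ) - 1) / (θ : ℝ))) ∧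
    sInf (Rone θ '' Set.Ioo (1 / (θ : ℝ)) 1)
      = 2 * (((θ : ℝ) - 1) / ((θ : ℝ) - 2)) * Real.log ((θ : ℝ) - 1) := by
  have hT : (2 : ℝ) < θ := by exact_mod_cast hθ
  have hb : ((θ : ℝ) - 1) / θ ∈ Ioo (1 / (θ : ℝ)) 1 :=
    ⟨(one_div_lt_half hT).trans (half_lt_sub_one_div hT),
      (div_lt_one (by linarith)).mpr (by linarith)⟩
  refine ⟨fun t ht => le_Rone_and_eq_iff hT ht,
    IsLeast.csInf_eq ⟨⟨_, hb, (le_Rone_and_eq_iff hT hb).2.mpr rfl⟩, ?_⟩⟩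
  rintro _ ⟨t, ht, rfl⟩
  exact (le_Rone_and_eq_iff hT ht).1
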